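/- For σ = [[4,1],[1,4]] : ℤ² → ℤ², every group homomorphism ι : ℤ[1/5] → lim→(ℤ², σ) has the property that ι(1) is represented at some stage by a vector of the form (c, c) with c ∈ ℤ. -/

import Mathlib

/-!
The functional `skew v = v 0 - v 1` vanishes exactly on the diagonal and is multiplied by `3`
under `σ`, so it is well defined on the direct limit up to powers of `3`. Since `1 ∈ ℤ[1/5]` is
divisible by every power of `5`, so is its image under `ι`; as `5` is prime to `3`, the skew of any
representative of `ι 1` is then divisible by every power of `5`, hence zero.
-/

noncomputable section

def zOneDiv (p : ℕ) : AddSubgroup ℚ :=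
  AddSubgroup.closure {q : ℚ | ∃ n : ℕ, q = 1 / (p : ℚ) ^ n}

def sigma : Module.End ℤ (Fin 2 → ℤ) := Matrix.toLin' !![4, 1; 1, 4]

def fSys : ∀ i j : ℕ, i ≤ j → (Fin 2 → ℤ) →ₗ[ℤ] (Fin 2 → ℤ) :=
  fun i j _ => sigma ^ (j - i)

def L : Type := Module.DirectLimit (fun _ : ℕ => Fin 2 → ℤ) fSys

instance : AddCommGroup L := Module.DirectLimit.addCommGroup _ fSys

def ofL (k : ℕ) (v : Fin 2 → ℤ) : L :=
  Module.DirectLimit.of ℤ ℕ (fun _ : ℕ => Fin 2 → ℤ) fSys k v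

def one5 : ↥(zOneDiv 5) := ⟨1, AddSubgroup.subset_closure ⟨0, by norm_num⟩⟩

instance : DirectedSystem (fun _ : ℕ => Fin 2 → ℤ) (fun i j h => fSys i j h) where
  map_self i x := by simp [fSys]
  map_map {c b a} hab hbc x := by
    simp only [fSys, ← Module.End.mul_apply, ← pow_add]
    rw [show c - b + (b - a) = c - a by omega]

lemma exists_ofL_eq (x : L) : ∃ k v, ofL k v = x :=
  Module.DirectLimit.exists_of (x : Module.DirectLimit _ fSys)

lemma sigma_apply (v : Fin 2 → ℤ) : sigma v = ![4 * v 0 + v 1, v 0 + 4 * v 1] := by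
  funext i
  fin_cases i <;> simp [sigma, Matrix.toLin'_apply, Matrix.mulVec, dotProduct, Fin.sum_univ_two]

def skew (v : Fin 2 → ℤ) : ℤ := v 0 - v 1

lemma skew_sigma (v : Fin 2 → ℤ) : skew (sigma v) = 3 * skew v := by
  simp [skew, sigma_apply]
  ring

lemma skew_sigma_pow (n : ℕ) (v : Fin 2 → ℤ) : skew ((sigma ^ n) v) = 3 ^ n * skew v := by
  induction n generalizing v with
  | zero => simp
  | succ n ih => rw [pow_succ, Module.End.mul_apply, ih, skew_sigma, pow_succ, mul_assoc]

lemma skew_fSys (i j : ℕ) (h : i ≤ j) (v : Fin 2 → ℤ) :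
    skew (fSys i j h v) = 3 ^ (j - i) * skew v :=
  skew_sigma_pow _ _

lemma skew_zsmul (a : ℤ) (v : Fin 2 → ℤ) : skew (a • v) = a * skew v := by
  simp [skew]
  ring

lemma eq_const_of_skew_eq_zero {v : Fin 2 → ℤ} (h : skew v = 0) : v = fun _ => v 0 := by
  funext i
  fin_cases i
  · rfl
  · simp only [skew] at h
    simp
    omega

lemma dvd_skew_of_ofL_eq_zsmul {a : ℤ} (ha : IsCoprime a 3) {k j : ℕ} {v w : Fin 2 → ℤ}
    (h : ofL k v = a • ofL j w) : a ∣ skew v := by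
  set m := max k j
  have hk : k ≤ m := le_max_left _ _
  have hj : j ≤ m := le_max_right _ _
  have hm : ofL m (fSys k m hk v) = ofL m (a • fSys j m hj w) := by
    simp only [ofL, map_zsmul, Module.DirectLimit.of_f]
    exact h
  obtain ⟨p, hmp, hp⟩ := Module.DirectLimit.exists_eq_of_of_eq hm
  have hskew := congrArg skew hp
  simp only [skew_fSys, skew_zsmul, ← mul_assoc] at hskew
  have hcop : IsCoprime a (3 ^ (p - m) * 3 ^ (m - k)) := (ha.pow_right).mul_right ha.pow_right
  exact hcop.dvd_of_dvd_mul_left ⟨3 ^ (p - m) * 3 ^ (m - j) * skew w, hskew.trans (by ring)⟩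

lemma exists_pow_zsmul_eq_one5 (n : ℕ) : ∃ x : zOneDiv 5, (5 : ℤ) ^ n • x = one5 := by
  refine ⟨⟨1 / (5 : ℚ) ^ n, AddSubgroup.subset_closure ⟨n, rfl⟩⟩, Subtype.ext ?_⟩
  simp [one5]

lemma Int.eq_zero_of_forall_pow_dvd {a b : ℤ} (ha : a.natAbs ≠ 1) (h : ∀ n : ℕ, a ^ n ∣ b) :
    b = 0 := by
  by_contra hb
  obtain ⟨n, hn⟩ := Int.finiteMultiplicity_iff.mpr ⟨ha, hb⟩
  exact hn (h _)

/-- Every group homomorphism `ι : ℤ[1/5] → lim→(ℤ², [[4,1],[1,4]])` sends `1` to an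
element represented at some stage by a diagonal vector `(c, c)` with `c ∈ ℤ`. -/
theorem stmt2 (ι : ↥(zOneDiv 5) →+ L) :
    ∃ (k : ℕ) (c : ℤ), ι one5 = ofL k (fun _ => c) := by
  obtain ⟨k, v, hv⟩ := exists_ofL_eq (ι one5)
  have h53 : IsCoprime (5 : ℤ) 3 := by norm_num [Int.isCoprime_iff_gcd_eq_one]
  have hdvd (n : ℕ) : (5 : ℤ) ^ n ∣ skew v := by
    obtain ⟨x, hx⟩ := exists_pow_zsmul_eq_one5 n
    obtain ⟨j, w, hw⟩ := exists_ofL_eq (ι x)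
    have hdiv : ofL k v = (5 : ℤ) ^ n • ofL j w := by rw [hv, hw, ← map_zsmul, hx]
    exact dvd_skew_of_ofL_eq_zsmul h53.pow_left hdiv
  have hdiag : v = fun _ => v 0 :=
    eq_const_of_skew_eq_zero (Int.eq_zero_of_forall_pow_dvd (by norm_num) hdvd)
  exact ⟨k, v 0, hv ▸ congrArg (ofL k) hdiag⟩

end
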